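/- Let $\tilde K(x,y) = \chi_{[2,3]}(y)\, K_2(x - y - 1)$ with $K_2(t) = t^{-1/2}(\log(e/t))^{-(1+\beta)/2}\chi_{(0,1)}(t)$, $\beta > 0$, and let $s_0 > 2$. Then there exist an interval $Q \subset \mathbb{R}$ and points $x, y \in \frac12 Q$ such that $\big\| [\tilde K(\cdot, x) - \tilde K(\cdot, y)] \chi_{2Q \setminus Q} \big\|_{L^{s_0}(\mathbb{R})} = \infty$. Concretely, this holds for $Q = [0,4]$, any $x \in [1,2)$, and $y = 3$. -/

import Mathlib

/-!
On `(4, 5)` the point `x < 2` lies outside the support `[2, 3]` of `K̃(z, ·)`, so the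
difference is `-K₂(z - 4)`. Since `log(e/t) ≤ (1 + ε⁻¹) t^{-ε}` on `(0, 1]`, the logarithmic
factor of `K₂` costs only an arbitrarily small power: `K₂(t) ≥ c t^{-1/s₀}` as `1/s₀ < 1/2`.
Hence `|K₂(z - 4)|^{s₀}` dominates `c^{s₀} (z - 4)⁻¹`, which is not integrable at `4`.
-/

open MeasureTheory Set ENNReal

/-- The kernel `K₂(t) = t^{-1/2} (log(e/t))^{-(1+β)/2} χ_{(0,1)}(t)`. -/
noncomputable def K2 (β : ℝ) (t : ℝ) : ℝ :=
  Set.indicator (Set.Ioo 0 1)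
    (fun t => t ^ (-(1:ℝ)/2) * (Real.log (Real.exp 1 / t)) ^ (-(1+β)/2)) t

/-- The kernel `K̃(x,y) = χ_{[2,3]}(y) K₂(x-y-1)`. -/
noncomputable def Ktil (β : ℝ) (x y : ℝ) : ℝ :=
  Set.indicator (Set.Icc 2 3) (fun _ => (1:ℝ)) y * K2 β (x - y - 1)

lemma lintegral_Ioo_sub_inv_eq_top {a b : ℝ} (hab : a < b) :
    ∫⁻ t in Ioo a b, ENNReal.ofReal ((t - a)⁻¹) = ⊤ := by
  by_contra h
  have hint : IntegrableOn (fun t => (t - a)⁻¹) (Ioo a b) := by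
    refine ⟨by fun_prop, (hasFiniteIntegral_iff_ofReal ?_).2 (lt_top_iff_ne_top.2 h)⟩
    filter_upwards [ae_restrict_mem measurableSet_Ioo] with t ht
    exact inv_nonneg.2 (sub_nonneg.2 ht.1.le)
  have := (intervalIntegrable_iff_integrableOn_Ioo_of_le hab.le).2 hint
  simp [hab.ne, left_mem_uIcc] at this

lemma eLpNorm_eq_top_of_rpow_le_abs {f : ℝ → ℝ} {p c a b : ℝ} (hp : 0 < p) (hc : 0 < c)
    (hab : a < b) (hf : ∀ z ∈ Ioo a b, c * (z - a) ^ (-p⁻¹) ≤ |f z|) :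
    eLpNorm f (ENNReal.ofReal p) volume = ⊤ := by
  have hpt : ∀ z ∈ Ioo a b, ENNReal.ofReal (c ^ p * (z - a)⁻¹) ≤ ‖f z‖ₑ ^ p := by
    intro z hz
    have hza : 0 < z - a := sub_pos.2 hz.1
    have hlow : 0 ≤ c * (z - a) ^ (-p⁻¹) := by positivity
    calc ENNReal.ofReal (c ^ p * (z - a)⁻¹)
        = ENNReal.ofReal (c * (z - a) ^ (-p⁻¹)) ^ p := by
          rw [ENNReal.ofReal_rpow_of_nonneg hlow hp.le, Real.mul_rpow hc.le (by positivity),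
            ← Real.rpow_mul hza.le, neg_mul, inv_mul_cancel₀ hp.ne', Real.rpow_neg_one]
      _ ≤ ‖f z‖ₑ ^ p := by
          rw [Real.enorm_eq_ofReal_abs]
          gcongr
          exact hf z hz
  rw [eLpNorm_eq_lintegral_rpow_enorm_toReal (by simpa using hp) ofReal_ne_top,
    ENNReal.toReal_ofReal hp.le, ENNReal.rpow_eq_top_iff_of_pos (by positivity), eq_top_iff]
  calc ⊤ = ∫⁻ z in Ioo a b, ENNReal.ofReal (c ^ p * (z - a)⁻¹) := by
        simp_rw [ENNReal.ofReal_mul (by positivity : 0 ≤ c ^ p)]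
        rw [lintegral_const_mul' _ _ ofReal_ne_top, lintegral_Ioo_sub_inv_eq_top hab,
          ENNReal.mul_top (by positivity)]
    _ ≤ ∫⁻ z in Ioo a b, ‖f z‖ₑ ^ p := setLIntegral_mono' measurableSet_Ioo hpt
    _ ≤ ∫⁻ z, ‖f z‖ₑ ^ p := setLIntegral_le_lintegral _ _

lemma log_exp_one_div_le_mul_rpow_neg {t ε : ℝ} (ht₀ : 0 < t) (ht₁ : t ≤ 1) (hε : 0 < ε) :
    Real.log (Real.exp 1 / t) ≤ (1 + ε⁻¹) * t ^ (-ε) := by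
  have hone : 1 ≤ t ^ (-ε) :=
    Real.one_le_rpow_of_pos_of_le_one_of_nonpos ht₀ ht₁ (by linarith)
  have hlog : Real.log t⁻¹ ≤ t ^ (-ε) / ε := by
    simpa [Real.inv_rpow ht₀.le, Real.rpow_neg ht₀.le] using
      Real.log_le_rpow_div (inv_nonneg.2 ht₀.le) hε
  rw [div_eq_mul_inv, Real.log_mul (Real.exp_ne_zero 1) (inv_ne_zero ht₀.ne'), Real.log_exp]
  calc 1 + Real.log t⁻¹ ≤ t ^ (-ε) + t ^ (-ε) / ε := add_le_add hone hlog
    _ = (1 + ε⁻¹) * t ^ (-ε) := by ring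

lemma exists_mul_rpow_le_K2 {β δ : ℝ} (hβ : -1 < β) (hδ : δ < 1 / 2) :
    ∃ c > 0, ∀ t ∈ Ioo (0 : ℝ) 1, c * t ^ (-δ) ≤ K2 β t := by
  set ε := (1 - 2 * δ) / (1 + β)
  have hε : 0 < ε := div_pos (by linarith) (by linarith)
  have hεβ : ε * (1 + β) = 1 - 2 * δ := div_mul_cancel₀ _ (by linarith)
  refine ⟨(1 + ε⁻¹) ^ (-(1 + β) / 2), by positivity, fun t ⟨ht₀, ht₁⟩ => ?_⟩
  have hlog_pos : 0 < Real.log (Real.exp 1 / t) := by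
    rw [Real.log_div (Real.exp_ne_zero 1) ht₀.ne', Real.log_exp]
    linarith [Real.log_neg ht₀ ht₁]
  have hsplit : ((1 + ε⁻¹) * t ^ (-ε)) ^ (-(1 + β) / 2)
      = (1 + ε⁻¹) ^ (-(1 + β) / 2) * t ^ (ε * (1 + β) / 2) := by
    rw [Real.mul_rpow (by positivity) (by positivity), ← Real.rpow_mul ht₀.le]
    ring_nf
  rw [K2, indicator_of_mem (mem_Ioo.2 ⟨ht₀, ht₁⟩)]
  calc (1 + ε⁻¹) ^ (-(1 + β) / 2) * t ^ (-δ)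
      = t ^ (-(1 : ℝ) / 2) * ((1 + ε⁻¹) * t ^ (-ε)) ^ (-(1 + β) / 2) := by
        rw [hsplit, mul_left_comm, ← Real.rpow_add ht₀]
        congr 2
        linear_combination (-1 / 2 : ℝ) * hεβ
    _ ≤ t ^ (-(1 : ℝ) / 2) * Real.log (Real.exp 1 / t) ^ (-(1 + β) / 2) := by
        refine mul_le_mul_of_nonneg_left ?_ (by positivity)
        exact Real.rpow_le_rpow_of_nonpos hlog_pos
          (log_exp_one_div_le_mul_rpow_neg ht₀ ht₁.le hε) (by linarith)

lemma Ktil_sub_Ktil_three_of_mem_Ioo {β x z : ℝ} (hx : x < 2) (hz : z ∈ Ioo (4 : ℝ) 5) :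
    indicator (Icc (-2 : ℝ) 6 \ Icc 0 4) (fun z => Ktil β z x - Ktil β z 3) z =
      -K2 β (z - 4) := by
  obtain ⟨hz₄, hz₅⟩ := hz
  have hzQ : z ∈ Icc (-2 : ℝ) 6 \ Icc 0 4 :=
    ⟨⟨by linarith, by linarith⟩, fun h => by linarith [h.2]⟩
  rw [indicator_of_mem hzQ, Ktil, Ktil,
    indicator_of_notMem (fun h => by linarith [h.1]), indicator_of_mem (by norm_num)]
  ring_nf

/-- For `s₀ > 2`, the kernel `K̃` fails the `L^{s₀}`-Hörmander-2 condition: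
for `Q = [0,4]` (so `½Q = [1,3]` and `2Q \ Q = [-2,6] \ [0,4]`), any `x ∈ [1,2)`
and `y = 3`, the `L^{s₀}` norm of `[K̃(·,x) - K̃(·,y)] χ_{2Q \ Q}` is infinite. -/
theorem stmt11 (β : ℝ) (hβ : 0 < β) (s0 : ℝ) (hs0 : 2 < s0)
    (x : ℝ) (hx : x ∈ Set.Ico (1:ℝ) 2) :
    eLpNorm (Set.indicator (Set.Icc (-2:ℝ) 6 \ Set.Icc 0 4)
        (fun z => Ktil β z x - Ktil β z 3)) (ENNReal.ofReal s0) volume = ⊤ := by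
  have hs0_pos : 0 < s0 := by linarith
  obtain ⟨c, hc, hK2⟩ := exists_mul_rpow_le_K2 (β := β) (δ := s0⁻¹) (by linarith)
    (by rw [one_div]; exact (inv_lt_inv₀ hs0_pos two_pos).2 hs0)
  refine eLpNorm_eq_top_of_rpow_le_abs hs0_pos hc (by norm_num : (4 : ℝ) < 5) fun z hz => ?_
  rw [Ktil_sub_Ktil_three_of_mem_Ioo hx.2 hz, abs_neg]
  exact (hK2 (z - 4) ⟨by linarith [hz.1], by linarith [hz.2]⟩).trans (le_abs_self _)
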